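/- Let μ be a probability distribution on a product of nonempty finite types with coordinate random variables U, A, C, B. Assume the pair (A, U) is jointly independent of C, i.e., P(A=a', U=u', C=c') = P(A=a', U=u')·P(C=c') for all a', u', c'. Fix values a, c, b; assume P(U=u, A=a', C=c) > 0 for every u and a', and assume B is conditionally independent of A given (U, C) in the sense that P(B=b | C=c, U=u, A=a') = P(B=b | C=c, U=u) for all u and a'. Then Σ_u P(U=u)·P(A=a|U=u)·P(B=b | C=c, U=u) = P(A=a)·P(B=b | C=c, A=a). (Core probabilistic identity in the proof of Proposition 2, case where the edge from A to B is removed.) -/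
import Mathlib


open Classical in
/-- Probability of an event `E` under a finitely supported distribution `μ`. -/
noncomputable def pr {Ω : Type*} [Fintype Ω] (μ : Ω → ℝ) (E : Ω → Prop) : ℝ :=
  ∑ ω, if E ω then μ ω else 0

/-- Conditional probability `P(E | F) = P(E ∧ F) / P(F)`. -/
noncomputable def cpr {Ω : Type*} [Fintype Ω] (μ : Ω → ℝ) (E F : Ω → Prop) : ℝ :=
  pr μ (fun ω => E ω ∧ F ω) / pr μ F

open Classical

lemma pr_congr {Ω : Type*} [Fintype Ω] (μ : Ω → ℝ) {E F : Ω → Prop}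
    (h : ∀ ω, E ω ↔ F ω) : pr μ E = pr μ F := by
  unfold pr
  exact Finset.sum_congr rfl fun ω _ => by simp [h ω]

lemma pr_mono {Ω : Type*} [Fintype Ω] {μ : Ω → ℝ} (hnn : ∀ ω, 0 ≤ μ ω)
    {E F : Ω → Prop} (h : ∀ ω, E ω → F ω) : pr μ E ≤ pr μ F := by
  unfold pr
  refine Finset.sum_le_sum fun ω _ => ?_
  by_cases hE : E ω
  · simp [hE, h ω hE]
  · simp only [hE, if_false]
    split
    · exact hnn ω
    · exact le_rfl

lemma pr_fiber {Ω V : Type*} [Fintype Ω] [Fintype V] (μ : Ω → ℝ)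
    (E : Ω → Prop) (f : Ω → V) :
    pr μ E = ∑ v, pr μ (fun ω => E ω ∧ f ω = v) := by
  unfold pr
  rw [Finset.sum_comm]
  refine Finset.sum_congr rfl fun ω _ => ?_
  by_cases hE : E ω
  · simp [hE, Finset.sum_ite_eq]
  · simp [hE]

/-- Core probabilistic identity in the proof of Proposition 2, case where the
edge from `A` to `B` is removed. -/
theorem stmt9 {U A C B : Type*}
    [Fintype U] [Nonempty U] [Fintype A] [Nonempty A]
    [Fintype C] [Nonempty C] [Fintype B] [Nonempty B]
    (μ : U × A × C × B → ℝ)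
    (hnn : ∀ ω, 0 ≤ μ ω) (hsum : ∑ ω, μ ω = 1)
    (hindep : ∀ (a' : A) (u' : U) (c' : C),
      pr μ (fun ω => ω.2.1 = a' ∧ ω.1 = u' ∧ ω.2.2.1 = c') =
        pr μ (fun ω => ω.2.1 = a' ∧ ω.1 = u') * pr μ (fun ω => ω.2.2.1 = c'))
    (a : A) (c : C) (b : B)
    (hpos : ∀ (u : U) (a' : A),
      0 < pr μ (fun ω => ω.1 = u ∧ ω.2.1 = a' ∧ ω.2.2.1 = c))
    (hCI : ∀ (u : U) (a' : A),
      cpr μ (fun ω => ω.2.2.2 = b)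
          (fun ω => ω.2.2.1 = c ∧ ω.1 = u ∧ ω.2.1 = a') =
        cpr μ (fun ω => ω.2.2.2 = b) (fun ω => ω.2.2.1 = c ∧ ω.1 = u)) :
    ∑ u : U, pr μ (fun ω => ω.1 = u) *
        cpr μ (fun ω => ω.2.1 = a) (fun ω => ω.1 = u) *
        cpr μ (fun ω => ω.2.2.2 = b) (fun ω => ω.2.2.1 = c ∧ ω.1 = u) =
      pr μ (fun ω => ω.2.1 = a) *
        cpr μ (fun ω => ω.2.2.2 = b) (fun ω => ω.2.2.1 = c ∧ ω.2.1 = a) := by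
  -- notation
  set Pc := pr μ (fun ω => ω.2.2.1 = c) with hPc
  set Pa := pr μ (fun ω => ω.2.1 = a) with hPa
  set Q : U → ℝ := fun u => cpr μ (fun ω => ω.2.2.2 = b) (fun ω => ω.2.2.1 = c ∧ ω.1 = u) with hQ
  have hPu : ∀ u : U, 0 < pr μ (fun ω => ω.1 = u) := fun u =>
    lt_of_lt_of_le (hpos u a) (pr_mono hnn fun ω h => h.1)
  have hPcpos : 0 < Pc :=
    lt_of_lt_of_le (hpos (Classical.arbitrary U) a) (pr_mono hnn fun ω h => h.2.2)
  have hPau : ∀ u : U, 0 < pr μ (fun ω => ω.2.1 = a ∧ ω.1 = u) := fun u =>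
    lt_of_lt_of_le (hpos u a) (pr_mono hnn fun ω h => ⟨h.2.1, h.1⟩)
  have hPapos : 0 < Pa :=
    lt_of_lt_of_le (hPau (Classical.arbitrary U)) (pr_mono hnn fun ω h => h.1)
  -- P(c ∧ u ∧ a') positive
  have hcua : ∀ (u : U) (a' : A),
      0 < pr μ (fun ω => ω.2.2.1 = c ∧ ω.1 = u ∧ ω.2.1 = a') := fun u a' =>
    lt_of_lt_of_le (hpos u a') (pr_mono hnn fun ω h => ⟨h.2.2, h.1, h.2.1⟩)
  -- Step 2: joint with b
  have hstep2 : ∀ u : U,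
      pr μ (fun ω => ω.2.2.2 = b ∧ ω.2.2.1 = c ∧ ω.1 = u ∧ ω.2.1 = a) =
        Q u * pr μ (fun ω => ω.2.2.1 = c ∧ ω.1 = u ∧ ω.2.1 = a) := by
    intro u
    have h := hCI u a
    rw [cpr, div_eq_iff (ne_of_gt (hcua u a))] at h
    exact h
  -- independence restated
  have hind : ∀ u : U,
      pr μ (fun ω => ω.2.2.1 = c ∧ ω.1 = u ∧ ω.2.1 = a) =
        pr μ (fun ω => ω.2.1 = a ∧ ω.1 = u) * Pc := by
    intro u
    rw [← hindep a u c]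
    exact pr_congr μ fun ω => by tauto
  -- P(b ∧ c ∧ a) as sum over u
  have hbca : pr μ (fun ω => ω.2.2.2 = b ∧ ω.2.2.1 = c ∧ ω.2.1 = a) =
      ∑ u : U, Q u * (pr μ (fun ω => ω.2.1 = a ∧ ω.1 = u) * Pc) := by
    rw [pr_fiber μ _ (fun ω => ω.1)]
    refine Finset.sum_congr rfl fun u _ => ?_
    rw [← hind u, ← hstep2 u]
    exact pr_congr μ fun ω => by tauto
  -- P(c ∧ a) = Pa * Pc
  have hca : pr μ (fun ω => ω.2.2.1 = c ∧ ω.2.1 = a) = Pa * Pc := by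
    rw [pr_fiber μ _ (fun ω => ω.1)]
    have : Pa = ∑ u : U, pr μ (fun ω => ω.2.1 = a ∧ ω.1 = u) := by
      rw [hPa, pr_fiber μ _ (fun ω => ω.1)]
    rw [this, Finset.sum_mul]
    refine Finset.sum_congr rfl fun u _ => ?_
    rw [← hind u]
    exact pr_congr μ fun ω => by tauto
  -- LHS simplification
  have hLHS : ∀ u : U,
      pr μ (fun ω => ω.1 = u) * cpr μ (fun ω => ω.2.1 = a) (fun ω => ω.1 = u) * Q u =
        pr μ (fun ω => ω.2.1 = a ∧ ω.1 = u) * Q u := by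
    intro u
    rw [cpr]
    field_simp [ne_of_gt (hPu u)]
  calc ∑ u : U, pr μ (fun ω => ω.1 = u) *
        cpr μ (fun ω => ω.2.1 = a) (fun ω => ω.1 = u) * Q u
      = ∑ u : U, pr μ (fun ω => ω.2.1 = a ∧ ω.1 = u) * Q u :=
        Finset.sum_congr rfl fun u _ => hLHS u
    _ = Pa * cpr μ (fun ω => ω.2.2.2 = b) (fun ω => ω.2.2.1 = c ∧ ω.2.1 = a) := by
        rw [cpr, hca, hbca]
        rw [Finset.sum_div]
        rw [Finset.mul_sum]
        refine Finset.sum_congr rfl fun u _ => ?_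
        field_simp [ne_of_gt hPapos, ne_of_gt hPcpos]
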